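/- arXiv:1611.02014 — 7 statements merged into one kernel-verified Lean document; each statement's English description precedes it below -/
import Mathlib

section
/- Fix reals a, ξ, η > 0 and reals θ, ẋ, ω. In ℝ², set e₁ = (cos θ, sin θ), e₁⊥ = (−sin θ, cos θ), e₂ = (cos θ, −sin θ), e₂⊥ = (−sin θ, −cos θ), and for i = 1,2 define vᵢ(s) = (ẋ, 0) + s·ω·eᵢ⊥ and fᵢ(s) = −ξ⟨vᵢ(s), eᵢ⟩eᵢ − η⟨vᵢ(s), eᵢ⊥⟩eᵢ⊥. Then ∫₀^{2a} (f₁(s) + f₂(s)) ds = (−4aξ·ẋ·cos²θ − 4aη·ẋ·sin²θ + 4a²η·ω·sin θ, 0); in particular the second (y) component of the total force is zero. -/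
open Real Set

/-- **Resistive Force Theory force balance for the scallop.**
The total drag force on the two links of length `2a` equals
`(−4aξ·ẋ·cos²θ − 4aη·ẋ·sin²θ + 4a²η·ω·sin θ, 0)`; in particular its
second (`y`) component vanishes. -/
theorem scallop_total_force (a ξ η θ xdot ω : ℝ)
    (ha : 0 < a) (hξ : 0 < ξ) (hη : 0 < η)
    (dot : ℝ × ℝ → ℝ × ℝ → ℝ)
    (hdot : ∀ v w : ℝ × ℝ, dot v w = v.1 * w.1 + v.2 * w.2)
    (e₁ e₁p e₂ e₂p : ℝ × ℝ)
    (he₁ : e₁ = (Real.cos θ, Real.sin θ))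
    (he₁p : e₁p = (-Real.sin θ, Real.cos θ))
    (he₂ : e₂ = (Real.cos θ, -Real.sin θ))
    (he₂p : e₂p = (-Real.sin θ, -Real.cos θ))
    (v₁ v₂ f₁ f₂ : ℝ → ℝ × ℝ)
    (hv₁ : ∀ s : ℝ, v₁ s = (xdot, 0) + (s * ω) • e₁p)
    (hv₂ : ∀ s : ℝ, v₂ s = (xdot, 0) + (s * ω) • e₂p)
    (hf₁ : ∀ s : ℝ, f₁ s = -((ξ * dot (v₁ s) e₁) • e₁) - (η * dot (v₁ s) e₁p) • e₁p)
    (hf₂ : ∀ s : ℝ, f₂ s = -((ξ * dot (v₂ s) e₂) • e₂) - (η * dot (v₂ s) e₂p) • e₂p) :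
    (∫ s in (0:ℝ)..(2 * a), (f₁ s + f₂ s)) =
      (-4 * a * ξ * xdot * Real.cos θ ^ 2 - 4 * a * η * xdot * Real.sin θ ^ 2
        + 4 * a ^ 2 * η * ω * Real.sin θ, 0) ∧
    (∫ s in (0:ℝ)..(2 * a), (f₁ s + f₂ s)).2 = 0 := by
  set A : ℝ := -2 * ξ * xdot * Real.cos θ ^ 2 - 2 * η * xdot * Real.sin θ ^ 2 with hA
  set B : ℝ := 2 * η * ω * Real.sin θ with hB
  have key : ∀ s : ℝ, f₁ s + f₂ s = (A + B * s) • ((1 : ℝ), (0 : ℝ)) := by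
    intro s
    have h1 := Real.sin_sq_add_cos_sq θ
    simp only [hf₁, hf₂, hv₁, hv₂, hdot, he₁, he₁p, he₂, he₂p, Prod.smul_mk,
      Prod.mk_add_mk, Prod.neg_mk, Prod.mk_sub_mk, smul_eq_mul, hA, hB,
      Prod.ext_iff]
    constructor
    · linear_combination (2 * η * ω * Real.sin θ * s) * h1
    · ring
  have hint : (∫ s in (0:ℝ)..(2 * a), (f₁ s + f₂ s)) =
      (∫ s in (0:ℝ)..(2 * a), (A + B * s)) • ((1 : ℝ), (0 : ℝ)) := by
    rw [intervalIntegral.integral_congr (g := fun s => (A + B * s) • ((1 : ℝ), (0 : ℝ)))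
      (fun s _ => key s)]
    rw [intervalIntegral.integral_smul_const]
  have hval : (∫ s in (0:ℝ)..(2 * a), (A + B * s)) =
      -4 * a * ξ * xdot * Real.cos θ ^ 2 - 4 * a * η * xdot * Real.sin θ ^ 2
        + 4 * a ^ 2 * η * ω * Real.sin θ := by
    have : (∫ s in (0:ℝ)..(2 * a), (A + B * s)) =
        (∫ s in (0:ℝ)..(2 * a), A) + (∫ s in (0:ℝ)..(2 * a), B * s) := by
      rw [← intervalIntegral.integral_add intervalIntegrable_const
        ((Continuous.intervalIntegrable (by fun_prop) _ _ : IntervalIntegrable (fun s : ℝ => B * s) MeasureTheory.volume 0 (2 * a)))]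
    rw [this, intervalIntegral.integral_const, intervalIntegral.integral_const_mul]
    rw [integral_id]
    simp only [smul_eq_mul, hA, hB]
    ring
  rw [hint, hval]
  constructor
  · ext <;> simp
  · simp
end

section
/- Let a > b > 0 and m, ρ > 0. Define F₂(θ) = −a·√(m + ρπa²)·artanh(√((a²−b²)ρπ)·cos θ/√(m + ρπa²))/√(ρπ(a²−b²)). Then for every θ ∈ (0, π/2), F₂ is differentiable at θ with F₂'(θ) = V₂(θ) = a (m + ρπa²) sin θ / (m + ρπ b² cos²θ + ρπ a² sin²θ). -/
/-!
With `c = √((a²−b²)ρπ)` and `s = √(m+ρπa²)` we have `0 < c < s`, so `F₂ = −(a s / c) artanh((c/s) cos θ)`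
with `|(c/s) cos θ| < 1`. The chain rule gives `F₂' = a s² sin θ / (s² − c² cos² θ)`, and
`s² − c² cos² θ = m + ρπb² cos² θ + ρπa² sin² θ` because `cos² θ + sin² θ = 1`.
-/

open Real Set

/-- The inverse hyperbolic tangent. -/
noncomputable def artanh (x : ℝ) : ℝ := (1 / 2) * Real.log ((1 + x) / (1 - x))

lemma hasDerivAt_artanh {x : ℝ} (hx : |x| < 1) :
    HasDerivAt _root_.artanh (1 / (1 - x ^ 2)) x := by
  obtain ⟨hx₁, hx₂⟩ := abs_lt.mp hx
  have hlog : HasDerivAt (fun y => (1 / 2) * (log (1 + y) - log (1 - y)))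
      ((1 / 2) * (1 / (1 + x) - -1 / (1 - x))) x := by
    have hadd := ((hasDerivAt_id x).const_add 1).log (by simp; linarith)
    have hsub := ((hasDerivAt_id x).const_sub 1).log (by simp; linarith)
    simpa using (hadd.sub hsub).const_mul (1 / 2 : ℝ)
  have hcongr : (fun y => (1 / 2) * (log (1 + y) - log (1 - y))) =ᶠ[nhds x] _root_.artanh := by
    filter_upwards [Ioo_mem_nhds hx₁ hx₂] with y ⟨hy₁, hy₂⟩
    rw [_root_.artanh, log_div (by linarith) (by linarith)]
  refine (hlog.congr_of_eventuallyEq hcongr.symm).congr_deriv ?_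
  have hadd : 1 + x ≠ 0 := by linarith
  have hsub : 1 - x ≠ 0 := by linarith
  have hsq : 1 - x ^ 2 ≠ 0 := by nlinarith
  field_simp
  ring

lemma hasDerivAt_artanh_cos_div {c s : ℝ} (a θ : ℝ) (hc : 0 < c) (hcs : c < s) :
    HasDerivAt (fun t => -a * s * _root_.artanh (c * cos t / s) / c)
      (a * s ^ 2 * sin θ / (s ^ 2 - c ^ 2 * cos θ ^ 2)) θ := by
  have hs : 0 < s := hc.trans hcs
  have hbound : c * |cos θ| < s :=
    calc c * |cos θ| ≤ c * 1 := by gcongr; exact abs_cos_le_one θ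
      _ < s := by linarith
  have hlt : |c * cos θ / s| < 1 := by
    rwa [abs_div, abs_mul, abs_of_pos hc, abs_of_pos hs, div_lt_one hs]
  have hinner : HasDerivAt (fun t => c * cos t / s) (c * -sin θ / s) θ :=
    ((hasDerivAt_cos θ).const_mul c).div_const s
  refine ((((hasDerivAt_artanh hlt).comp θ hinner).const_mul (-a * s)).div_const c).congr_deriv ?_
  have hden : s ^ 2 - c ^ 2 * cos θ ^ 2 ≠ 0 := by
    have := mul_self_lt_mul_self (by positivity) hbound
    nlinarith [sq_abs (cos θ)]
  field_simp

/-- `F₂(θ) = −a·√(m+ρπa²)·artanh(√((a²−b²)ρπ)·cos θ/√(m+ρπa²))/√(ρπ(a²−b²))` is an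
antiderivative of the ideal-fluid dynamics coefficient
`V₂(θ) = a (m + ρπa²) sin θ / (m + ρπ b² cos²θ + ρπ a² sin²θ)` on `(0, π/2)`. -/
theorem deriv_F2 (a b m ρ : ℝ) (hb : 0 < b) (hba : b < a) (hm : 0 < m) (hρ : 0 < ρ)
    (F₂ : ℝ → ℝ)
    (hF₂ : ∀ θ : ℝ, F₂ θ =
      -a * Real.sqrt (m + ρ * π * a ^ 2) *
        _root_.artanh (Real.sqrt ((a ^ 2 - b ^ 2) * ρ * π) * Real.cos θ /
          Real.sqrt (m + ρ * π * a ^ 2)) / Real.sqrt (ρ * π * (a ^ 2 - b ^ 2))) :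
    ∀ θ ∈ Set.Ioo (0:ℝ) (π / 2),
      HasDerivAt F₂ (a * (m + ρ * π * a ^ 2) * Real.sin θ /
        (m + ρ * π * b ^ 2 * Real.cos θ ^ 2 + ρ * π * a ^ 2 * Real.sin θ ^ 2)) θ := by
  intro θ _
  have hab : 0 < (a ^ 2 - b ^ 2) * ρ * π :=
    mul_pos (mul_pos (sub_pos.mpr (by nlinarith)) hρ) pi_pos
  have hlt : (a ^ 2 - b ^ 2) * ρ * π < m + ρ * π * a ^ 2 := by
    linarith [mul_pos (mul_pos hρ pi_pos) (pow_pos hb 2)]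
  have hF : F₂ = fun t => -a * √(m + ρ * π * a ^ 2) *
      _root_.artanh (√((a ^ 2 - b ^ 2) * ρ * π) * cos t / √(m + ρ * π * a ^ 2)) /
        √((a ^ 2 - b ^ 2) * ρ * π) := by
    funext t
    rw [hF₂, show ρ * π * (a ^ 2 - b ^ 2) = (a ^ 2 - b ^ 2) * ρ * π by ring]
  rw [hF]
  convert hasDerivAt_artanh_cos_div a θ (sqrt_pos.mpr hab) (sqrt_lt_sqrt hab.le hlt) using 2
  · rw [sq_sqrt (hlt.trans' hab).le]
  · rw [sq_sqrt (hlt.trans' hab).le, sq_sqrt hab.le, sin_sq]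
    ring
end

section
/- Let a, b, m, ρ, ξ, η > 0 satisfy m(ξ−η) + ρπ(ξa² − ηb²) > 0 (which holds in particular when b is small enough relative to a). Then V₂(θ) > V₁(θ) for every θ ∈ (0, π/2). -/
open Real Set

/-- If `m(ξ−η) + ρπ(ξa² − ηb²) > 0` then the ideal dynamics coefficient dominates
the viscous one on `(0, π/2)`: `V₂(θ) > V₁(θ)`. -/
theorem V2_gt_V1 (a b m ρ ξ η : ℝ)
    (ha : 0 < a) (hb : 0 < b) (hm : 0 < m) (hρ : 0 < ρ) (hξ : 0 < ξ) (hη : 0 < η)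
    (hkey : m * (ξ - η) + ρ * π * (ξ * a ^ 2 - η * b ^ 2) > 0)
    (V₁ V₂ : ℝ → ℝ)
    (hV₁ : ∀ θ : ℝ, V₁ θ = a * η * Real.sin θ / (ξ * Real.cos θ ^ 2 + η * Real.sin θ ^ 2))
    (hV₂ : ∀ θ : ℝ, V₂ θ = a * (m + ρ * π * a ^ 2) * Real.sin θ /
        (m + ρ * π * b ^ 2 * Real.cos θ ^ 2 + ρ * π * a ^ 2 * Real.sin θ ^ 2)) :
    ∀ θ ∈ Set.Ioo (0:ℝ) (π / 2), V₁ θ < V₂ θ := by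
  intro θ hθ
  obtain ⟨h0, h1⟩ := hθ
  have hs : 0 < Real.sin θ := Real.sin_pos_of_pos_of_lt_pi h0 (lt_trans h1 (by linarith [Real.pi_pos]))
  have hc : 0 < Real.cos θ := Real.cos_pos_of_mem_Ioo ⟨by linarith [Real.pi_pos], h1⟩
  have hpyth : Real.sin θ ^ 2 + Real.cos θ ^ 2 = 1 := Real.sin_sq_add_cos_sq θ
  have hπ := Real.pi_pos
  have hd1 : 0 < ξ * Real.cos θ ^ 2 + η * Real.sin θ ^ 2 := by positivity
  have hd2 : 0 < m + ρ * π * b ^ 2 * Real.cos θ ^ 2 + ρ * π * a ^ 2 * Real.sin θ ^ 2 := by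
    positivity
  rw [hV₁, hV₂, div_lt_div_iff₀ hd1 hd2]
  have hs2 : Real.sin θ ^ 2 = 1 - Real.cos θ ^ 2 := by linarith
  have key : a * (m + ρ * π * a ^ 2) * Real.sin θ * (ξ * Real.cos θ ^ 2 + η * Real.sin θ ^ 2)
      - a * η * Real.sin θ * (m + ρ * π * b ^ 2 * Real.cos θ ^ 2 + ρ * π * a ^ 2 * Real.sin θ ^ 2)
      = a * Real.sin θ * Real.cos θ ^ 2 * (m * (ξ - η) + ρ * π * (ξ * a ^ 2 - η * b ^ 2)) := by
    rw [hs2]; ring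
  nlinarith [mul_pos (mul_pos (mul_pos ha hs) (mul_pos hc hc)) hkey]
end

section
/- Let a > b > 0, η > ξ > 0, m, ρ > 0, and assume m(ξ−η) + ρπ(ξa² − ηb²) > 0. Define F₁(θ) = a·η·artanh(√((η−ξ)/η)·cos θ)/√(η(η−ξ)) and F₂(θ) = −a·√(m + ρπa²)·artanh(√((a²−b²)ρπ)·cos θ/√(m + ρπa²))/√(ρπ(a²−b²)). Then the function F₂ − F₁ is strictly increasing on the interval (0, π/2). -/
/-!
Both `F₂` and `-F₁` have the form `θ ↦ -K * artanh (c * cos θ)` with `K > 0` and `0 < c < 1`.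
Since `cos` is strictly decreasing on `[0, π]` and `artanh` strictly increasing on `(-1, 1)`,
each of them is strictly increasing there, hence so is their sum.
-/

open Real Set

theorem artanh_eqOn_real_artanh : EqOn _root_.artanh Real.artanh (Icc (-1) 1) :=
  fun _ hx => (Real.artanh_eq_half_log hx).symm

theorem strictAntiOn_artanh_mul_cos {c : ℝ} (hc₀ : 0 < c) (hc₁ : c < 1) :
    StrictAntiOn (fun θ => _root_.artanh (c * cos θ)) (Icc 0 π) := by
  have hmaps : MapsTo (fun θ => c * cos θ) (Icc 0 π) (Ioo (-1) 1) := fun θ _ => by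
    have := abs_cos_le_one θ
    rw [mem_Ioo, ← abs_lt, abs_mul, abs_of_pos hc₀]
    nlinarith
  have hartanh : StrictMonoOn _root_.artanh (Ioo (-1) 1) :=
    Real.strictMonoOn_artanh.congr (artanh_eqOn_real_artanh.mono Ioo_subset_Icc_self).symm
  exact hartanh.comp_strictAntiOn
    (fun x hx y hy hxy => mul_lt_mul_of_pos_left (strictAntiOn_cos hx hy hxy) hc₀) hmaps

theorem strictMonoOn_neg_mul_artanh_mul_cos {K c : ℝ} (hK : 0 < K) (hc₀ : 0 < c) (hc₁ : c < 1) :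
    StrictMonoOn (fun θ => -(K * _root_.artanh (c * cos θ))) (Icc 0 π) :=
  fun _ hx _ hy hxy =>
    neg_lt_neg (mul_lt_mul_of_pos_left (strictAntiOn_artanh_mul_cos hc₀ hc₁ hx hy hxy) hK)

theorem F2_sub_F1_strictMono_general (a b m ρ ξ η : ℝ)
    (hb : 0 < b) (hba : b < a) (hξ : 0 < ξ) (hξη : ξ < η) (hm : 0 < m) (hρ : 0 < ρ)
    (F₁ F₂ : ℝ → ℝ)
    (hF₁ : ∀ θ : ℝ, F₁ θ =
      a * η * _root_.artanh (Real.sqrt ((η - ξ) / η) * Real.cos θ) / Real.sqrt (η * (η - ξ)))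
    (hF₂ : ∀ θ : ℝ, F₂ θ =
      -a * Real.sqrt (m + ρ * π * a ^ 2) *
        _root_.artanh (Real.sqrt ((a ^ 2 - b ^ 2) * ρ * π) * Real.cos θ /
          Real.sqrt (m + ρ * π * a ^ 2)) / Real.sqrt (ρ * π * (a ^ 2 - b ^ 2))) :
    StrictMonoOn (fun θ => F₂ θ - F₁ θ) (Set.Ioo (0:ℝ) (π / 2)) := by
  have ha : 0 < a := hb.trans hba
  have hB : 0 < (a ^ 2 - b ^ 2) * ρ * π := by
    have : b ^ 2 < a ^ 2 := pow_lt_pow_left₀ hba hb.le two_ne_zero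
    have := pi_pos
    positivity
  set c₁ := √((η - ξ) / η)
  set c₂ := √((a ^ 2 - b ^ 2) * ρ * π) / √(m + ρ * π * a ^ 2)
  set K₁ := a * η / √(η * (η - ξ))
  set K₂ := a * √(m + ρ * π * a ^ 2) / √(ρ * π * (a ^ 2 - b ^ 2))
  have hc₁ : 0 < c₁ ∧ c₁ < 1 := by
    refine ⟨sqrt_pos.2 (div_pos (by linarith) (by linarith)), ?_⟩
    rw [sqrt_lt' one_pos, one_pow, div_lt_one (by linarith)]
    linarith
  have hc₂ : 0 < c₂ ∧ c₂ < 1 := by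
    have hA : 0 < m + ρ * π * a ^ 2 := by positivity
    refine ⟨div_pos (sqrt_pos.2 hB) (sqrt_pos.2 hA), (div_lt_one (sqrt_pos.2 hA)).2 ?_⟩
    exact sqrt_lt_sqrt hB.le (by nlinarith [pi_pos, sq_nonneg b, mul_pos hρ pi_pos])
  have hK₁ : 0 < K₁ := div_pos (mul_pos ha (by linarith)) (sqrt_pos.2 (by nlinarith))
  have hK₂ : 0 < K₂ := div_pos (by positivity) (sqrt_pos.2 (by linarith [hB]))
  have hsplit : ∀ θ, F₂ θ - F₁ θ =
      -(K₂ * _root_.artanh (c₂ * cos θ)) + -(K₁ * _root_.artanh (c₁ * cos θ)) := by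
    intro θ
    rw [hF₁, hF₂, mul_div_right_comm √((a ^ 2 - b ^ 2) * ρ * π)]
    simp only [K₁, K₂]
    ring
  have hsum := (strictMonoOn_neg_mul_artanh_mul_cos hK₂ hc₂.1 hc₂.2).add
    (strictMonoOn_neg_mul_artanh_mul_cos hK₁ hc₁.1 hc₁.2)
  refine (hsum.congr fun θ _ => (hsplit θ).symm).mono ?_
  exact Ioo_subset_Icc_self.trans (Icc_subset_Icc_right (by linarith [pi_pos]))

/-- The difference `F₂ − F₁` of the primitives of the ideal and viscous dynamics
coefficients is strictly increasing on `(0, π/2)` when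
`m(ξ−η) + ρπ(ξa² − ηb²) > 0`. -/
theorem F2_sub_F1_strictMono (a b m ρ ξ η : ℝ)
    (hb : 0 < b) (hba : b < a) (hξ : 0 < ξ) (hξη : ξ < η) (hm : 0 < m) (hρ : 0 < ρ)
    (hkey : m * (ξ - η) + ρ * π * (ξ * a ^ 2 - η * b ^ 2) > 0)
    (F₁ F₂ : ℝ → ℝ)
    (hF₁ : ∀ θ : ℝ, F₁ θ =
      a * η * _root_.artanh (Real.sqrt ((η - ξ) / η) * Real.cos θ) / Real.sqrt (η * (η - ξ)))
    (hF₂ : ∀ θ : ℝ, F₂ θ =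
      -a * Real.sqrt (m + ρ * π * a ^ 2) *
        _root_.artanh (Real.sqrt ((a ^ 2 - b ^ 2) * ρ * π) * Real.cos θ /
          Real.sqrt (m + ρ * π * a ^ 2)) / Real.sqrt (ρ * π * (a ^ 2 - b ^ 2))) :
    StrictMonoOn (fun θ => F₂ θ - F₁ θ) (Set.Ioo (0:ℝ) (π / 2)) :=
  F2_sub_F1_strictMono_general a b m ρ ξ η hb hba hξ hξη hm hρ F₁ F₂ hF₁ hF₂
end

section
/- Let a > b > 0, η > ξ > 0, m, ρ > 0 with m(ξ−η) + ρπ(ξa² − ηb²) > 0, let F₁, F₂ be antiderivatives of V₁, V₂ respectively, and fix θ₀ ∈ (0, π/2). Then the map θ₁ ↦ (F₂ − F₁)(θ₀) − (F₂ − F₁)(θ₁) is strictly decreasing on (0, π/2), and its image over (0, π/2) contains an open interval around 0; in particular, for θ₁ ∈ (0, π/2), the displacement is strictly positive if θ₁ < θ₀ and strictly negative if θ₁ > θ₀. -/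
open Real Set

/-- **One-switch displacement: both signs are realizable.**
The map `θ₁ ↦ (F₂ − F₁)(θ₀) − (F₂ − F₁)(θ₁)` is strictly decreasing on `(0, π/2)`,
its image contains an open interval around `0`, and the displacement is positive
when `θ₁ < θ₀` and negative when `θ₁ > θ₀`. -/
theorem one_switch_controllability (a b m ρ ξ η : ℝ)
    (hb : 0 < b) (hba : b < a) (hξ : 0 < ξ) (hξη : ξ < η) (hm : 0 < m) (hρ : 0 < ρ)
    (hkey : m * (ξ - η) + ρ * π * (ξ * a ^ 2 - η * b ^ 2) > 0)
    (V₁ V₂ F₁ F₂ : ℝ → ℝ)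
    (hV₁ : ∀ θ : ℝ, V₁ θ = a * η * Real.sin θ / (ξ * Real.cos θ ^ 2 + η * Real.sin θ ^ 2))
    (hV₂ : ∀ θ : ℝ, V₂ θ = a * (m + ρ * π * a ^ 2) * Real.sin θ /
        (m + ρ * π * b ^ 2 * Real.cos θ ^ 2 + ρ * π * a ^ 2 * Real.sin θ ^ 2))
    (hF₁ : ∀ θ ∈ Set.Ioo (0:ℝ) (π / 2), HasDerivAt F₁ (V₁ θ) θ)
    (hF₂ : ∀ θ ∈ Set.Ioo (0:ℝ) (π / 2), HasDerivAt F₂ (V₂ θ) θ)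
    (θ₀ : ℝ) (hθ₀ : θ₀ ∈ Set.Ioo (0:ℝ) (π / 2)) :
    StrictAntiOn (fun θ₁ => (F₂ θ₀ - F₁ θ₀) - (F₂ θ₁ - F₁ θ₁)) (Set.Ioo (0:ℝ) (π / 2)) ∧
    (∃ r > 0, Set.Ioo (-r) r ⊆
      (fun θ₁ => (F₂ θ₀ - F₁ θ₀) - (F₂ θ₁ - F₁ θ₁)) '' Set.Ioo (0:ℝ) (π / 2)) ∧
    (∀ θ₁ ∈ Set.Ioo (0:ℝ) (π / 2),
      (θ₁ < θ₀ → 0 < (F₂ θ₀ - F₁ θ₀) - (F₂ θ₁ - F₁ θ₁)) ∧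
      (θ₀ < θ₁ → (F₂ θ₀ - F₁ θ₀) - (F₂ θ₁ - F₁ θ₁) < 0)) := by
  have hπ : (0:ℝ) < π := Real.pi_pos
  set G : ℝ → ℝ := fun θ => F₂ θ - F₁ θ with hG
  -- derivative of G
  have hGd : ∀ θ ∈ Set.Ioo (0:ℝ) (π / 2), HasDerivAt G (V₂ θ - V₁ θ) θ := fun θ hθ =>
    (hF₂ θ hθ).sub (hF₁ θ hθ)
  -- positivity of V₂ - V₁
  have hpos : ∀ θ ∈ Set.Ioo (0:ℝ) (π / 2), 0 < V₂ θ - V₁ θ := by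
    intro θ hθ
    have hs : 0 < Real.sin θ := Real.sin_pos_of_pos_of_lt_pi hθ.1 (by linarith [hθ.2])
    have hc : 0 < Real.cos θ := Real.cos_pos_of_mem_Ioo ⟨by linarith [hθ.1], hθ.2⟩
    have hsc : Real.sin θ ^ 2 + Real.cos θ ^ 2 = 1 := Real.sin_sq_add_cos_sq θ
    have hD₁ : 0 < ξ * Real.cos θ ^ 2 + η * Real.sin θ ^ 2 := by nlinarith [sq_nonneg (Real.sin θ), sq_nonneg (Real.cos θ)]
    have hD₂ : 0 < m + ρ * π * b ^ 2 * Real.cos θ ^ 2 + ρ * π * a ^ 2 * Real.sin θ ^ 2 := by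
      positivity
    rw [hV₁, hV₂, div_sub_div _ _ hD₂.ne' hD₁.ne']
    apply div_pos _ (mul_pos hD₂ hD₁)
    have ha : 0 < a := hb.trans hba
    have key : a * (m + ρ * π * a ^ 2) * Real.sin θ * (ξ * Real.cos θ ^ 2 + η * Real.sin θ ^ 2) -
        (m + ρ * π * b ^ 2 * Real.cos θ ^ 2 + ρ * π * a ^ 2 * Real.sin θ ^ 2) * (a * η * Real.sin θ)
        = a * Real.sin θ * Real.cos θ ^ 2 *
          (m * (ξ - η) + ρ * π * (ξ * a ^ 2 - η * b ^ 2)) := by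
        linear_combination (a * Real.sin θ * m * η) * hsc
    rw [key]
    positivity
  -- strict monotonicity of G on Ioo
  have hmono : StrictMonoOn G (Set.Ioo (0:ℝ) (π / 2)) := by
    apply StrictMonoOn.mono (s := Set.Ioo (0:ℝ) (π / 2)) _ (le_refl _)
    exact strictMonoOn_of_hasDerivWithinAt_pos (convex_Ioo _ _)
      (fun θ hθ => ((hGd θ hθ).continuousAt).continuousWithinAt)
      (fun θ hθ => ((hGd θ (by rwa [interior_Ioo] at hθ)).hasDerivWithinAt))
      (fun θ hθ => hpos θ (by rwa [interior_Ioo] at hθ))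
  have hanti : StrictAntiOn (fun θ₁ => G θ₀ - G θ₁) (Set.Ioo (0:ℝ) (π / 2)) := by
    intro x hx y hy hxy
    have := hmono hx hy hxy
    simp only
    linarith
  refine ⟨hanti, ?_, ?_⟩
  · -- image contains an interval around 0
    have h0 := hθ₀.1
    have h1 := hθ₀.2
    set θa := θ₀ / 2 with hθa
    set θb := (θ₀ + π / 2) / 2 with hθb
    have hθaM : θa ∈ Set.Ioo (0:ℝ) (π / 2) := ⟨by linarith, by linarith⟩
    have hθbM : θb ∈ Set.Ioo (0:ℝ) (π / 2) := ⟨by linarith, by linarith⟩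
    have hab : θa < θb := by simp only [hθa, hθb]; linarith
    have hga : G θa < G θ₀ := hmono hθaM hθ₀ (by simp only [hθa]; linarith)
    have hgb : G θ₀ < G θb := hmono hθ₀ hθbM (by simp only [hθb]; linarith)
    refine ⟨min (G θ₀ - G θa) (G θb - G θ₀), lt_min (by linarith) (by linarith), ?_⟩
    intro y hy
    have hcont : ContinuousOn G (Set.Icc θa θb) := by
      intro θ hθ
      have hθM : θ ∈ Set.Ioo (0:ℝ) (π / 2) :=
        ⟨lt_of_lt_of_le hθaM.1 hθ.1, lt_of_le_of_lt hθ.2 hθbM.2⟩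
      exact ((hGd θ hθM).continuousAt).continuousWithinAt
    have hIVT := intermediate_value_Icc hab.le hcont
    have hmem : G θ₀ - y ∈ Set.Icc (G θa) (G θb) := by
      constructor <;>
        linarith [hy.1, hy.2, min_le_left (G θ₀ - G θa) (G θb - G θ₀),
          min_le_right (G θ₀ - G θa) (G θb - G θ₀)]
    obtain ⟨θ, hθmem, hθval⟩ := hIVT hmem
    refine ⟨θ, ⟨lt_of_lt_of_le hθaM.1 hθmem.1, lt_of_le_of_lt hθmem.2 hθbM.2⟩, ?_⟩
    simp only [hG] at hθval ⊢
    linarith [hθval]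
  · intro θ₁ hθ₁
    constructor
    · intro h
      have := hmono hθ₁ hθ₀ h
      simp only [hG] at this ⊢
      linarith
    · intro h
      have := hmono hθ₀ hθ₁ h
      simp only [hG] at this ⊢
      linarith
end

section
/- Let a > b > 0, η > ξ > 0, m, ρ > 0 with m(ξ−η) + ρπ(ξa² − ηb²) > 0, and let F₁, F₂ be antiderivatives of V₁, V₂ on (0, π/2). For θ₁, θ₂ ∈ (0, π/2) define Δx(θ₁, θ₂) = (F₂ − F₁)(θ₁) − (F₂ − F₁)(θ₂). Then Δx(θ₁, θ₂) > 0 if θ₁ > θ₂ and Δx(θ₁, θ₂) < 0 if θ₁ < θ₂. -/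
open Real Set

/-- **Sign of the three-phase displacement.** With switching angles
`θ₁, θ₂ ∈ (0, π/2)`, the displacement `Δx(θ₁,θ₂) = (F₂−F₁)(θ₁) − (F₂−F₁)(θ₂)` is
positive when `θ₁ > θ₂` and negative when `θ₁ < θ₂`. -/
theorem three_phase_displacement_sign (a b m ρ ξ η : ℝ)
    (hb : 0 < b) (hba : b < a) (hξ : 0 < ξ) (hξη : ξ < η) (hm : 0 < m) (hρ : 0 < ρ)
    (hkey : m * (ξ - η) + ρ * π * (ξ * a ^ 2 - η * b ^ 2) > 0)
    (V₁ V₂ F₁ F₂ : ℝ → ℝ)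
    (hV₁ : ∀ θ : ℝ, V₁ θ = a * η * Real.sin θ / (ξ * Real.cos θ ^ 2 + η * Real.sin θ ^ 2))
    (hV₂ : ∀ θ : ℝ, V₂ θ = a * (m + ρ * π * a ^ 2) * Real.sin θ /
        (m + ρ * π * b ^ 2 * Real.cos θ ^ 2 + ρ * π * a ^ 2 * Real.sin θ ^ 2))
    (hF₁ : ∀ θ ∈ Set.Ioo (0:ℝ) (π / 2), HasDerivAt F₁ (V₁ θ) θ)
    (hF₂ : ∀ θ ∈ Set.Ioo (0:ℝ) (π / 2), HasDerivAt F₂ (V₂ θ) θ) :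
    ∀ θ₁ ∈ Set.Ioo (0:ℝ) (π / 2), ∀ θ₂ ∈ Set.Ioo (0:ℝ) (π / 2),
      (θ₂ < θ₁ → 0 < (F₂ θ₁ - F₁ θ₁) - (F₂ θ₂ - F₁ θ₂)) ∧
      (θ₁ < θ₂ → (F₂ θ₁ - F₁ θ₁) - (F₂ θ₂ - F₁ θ₂) < 0) := by
  have hπ : 0 < π := Real.pi_pos
  have ha : 0 < a := hb.trans hba
  -- derivative of F₂ - F₁
  have hG : ∀ θ ∈ Set.Ioo (0:ℝ) (π/2),
      HasDerivAt (fun t => F₂ t - F₁ t) (V₂ θ - V₁ θ) θ := fun θ hθ =>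
    (hF₂ θ hθ).sub (hF₁ θ hθ)
  -- positivity of V₂ - V₁
  have hpos : ∀ θ ∈ Set.Ioo (0:ℝ) (π/2), 0 < V₂ θ - V₁ θ := by
    intro θ hθ
    have hs : 0 < Real.sin θ := Real.sin_pos_of_pos_of_lt_pi hθ.1
      (hθ.2.trans_le (by linarith))
    have hc : 0 < Real.cos θ := Real.cos_pos_of_mem_Ioo
      ⟨by linarith [hθ.1], hθ.2⟩
    have hsc : Real.sin θ ^ 2 + Real.cos θ ^ 2 = 1 := Real.sin_sq_add_cos_sq θ
    have hD₁ : 0 < ξ * Real.cos θ ^ 2 + η * Real.sin θ ^ 2 := by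
      have h1 : 0 < η * Real.sin θ ^ 2 := mul_pos (hξ.trans hξη) (pow_pos hs 2)
      nlinarith [sq_nonneg (Real.cos θ)]
    have hD₂ : 0 < m + ρ * π * b ^ 2 * Real.cos θ ^ 2 + ρ * π * a ^ 2 * Real.sin θ ^ 2 := by
      have : 0 < ρ * π := mul_pos hρ hπ
      positivity
    rw [hV₁, hV₂, sub_pos, div_lt_div_iff₀ hD₁ hD₂]
    have hc2 : 0 < Real.cos θ ^ 2 := by positivity
    have h1 : 0 < a * Real.sin θ * Real.cos θ ^ 2 *
        (m * (ξ - η) + ρ * π * (ξ * a ^ 2 - η * b ^ 2)) :=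
      mul_pos (mul_pos (mul_pos ha hs) hc2) hkey
    have key3 : a * (m + ρ * π * a ^ 2) * Real.sin θ * (ξ * Real.cos θ ^ 2 + η * Real.sin θ ^ 2)
          - a * η * Real.sin θ * (m + ρ * π * b ^ 2 * Real.cos θ ^ 2 + ρ * π * a ^ 2 * Real.sin θ ^ 2)
          = a * Real.sin θ * Real.cos θ ^ 2 *
            (m * (ξ - η) + ρ * π * (ξ * a ^ 2 - η * b ^ 2)) := by
      linear_combination (a * Real.sin θ * η * m) * hsc
    linarith [key3, h1]
  have hmono : StrictMonoOn (fun t => F₂ t - F₁ t) (Set.Ioo (0:ℝ) (π/2)) := by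
    apply strictMonoOn_of_deriv_pos (convex_Ioo _ _)
    · intro θ hθ
      exact ((hG θ hθ).differentiableAt.continuousAt).continuousWithinAt
    · intro θ hθ
      rw [interior_Ioo] at hθ
      rw [(hG θ hθ).deriv]
      exact hpos θ hθ
  intro θ₁ h₁ θ₂ h₂
  constructor
  · intro h
    have := hmono h₂ h₁ h
    simpa [sub_pos] using this
  · intro h
    have := hmono h₁ h₂ h
    simpa [sub_neg] using this
end

section
/- Let a > b > 0, η > ξ > 0, m, ρ > 0 with m(ξ−η) + ρπ(ξa² − ηb²) > 0, and let F₁, F₂ be antiderivatives of V₁, V₂ on (0, π/2). Then there exists r > 0 such that for every c ∈ ℝ with |c| < r there exist θ₁, θ₂ ∈ (0, π/2) with (F₂ − F₁)(θ₁) − (F₂ − F₁)(θ₂) = c; i.e. the two-angle displacement map (θ₁, θ₂) ↦ (F₂ − F₁)(θ₁) − (F₂ − F₁)(θ₂) is onto a neighborhood of 0. -/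
open Real Set

/-- **Surjectivity of the two-angle displacement map onto a neighborhood of zero.**
There is `r > 0` such that every displacement `c` with `|c| < r` is realized by
some switching angles `θ₁, θ₂ ∈ (0, π/2)`. -/
theorem two_angle_displacement_surjective (a b m ρ ξ η : ℝ)
    (hb : 0 < b) (hba : b < a) (hξ : 0 < ξ) (hξη : ξ < η) (hm : 0 < m) (hρ : 0 < ρ)
    (hkey : m * (ξ - η) + ρ * π * (ξ * a ^ 2 - η * b ^ 2) > 0)
    (V₁ V₂ F₁ F₂ : ℝ → ℝ)
    (hV₁ : ∀ θ : ℝ, V₁ θ = a * η * Real.sin θ / (ξ * Real.cos θ ^ 2 + η * Real.sin θ ^ 2))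
    (hV₂ : ∀ θ : ℝ, V₂ θ = a * (m + ρ * π * a ^ 2) * Real.sin θ /
        (m + ρ * π * b ^ 2 * Real.cos θ ^ 2 + ρ * π * a ^ 2 * Real.sin θ ^ 2))
    (hF₁ : ∀ θ ∈ Set.Ioo (0:ℝ) (π / 2), HasDerivAt F₁ (V₁ θ) θ)
    (hF₂ : ∀ θ ∈ Set.Ioo (0:ℝ) (π / 2), HasDerivAt F₂ (V₂ θ) θ) :
    ∃ r > 0, ∀ c : ℝ, |c| < r →
      ∃ θ₁ ∈ Set.Ioo (0:ℝ) (π / 2), ∃ θ₂ ∈ Set.Ioo (0:ℝ) (π / 2),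
        (F₂ θ₁ - F₁ θ₁) - (F₂ θ₂ - F₁ θ₂) = c := by
  have hπ : 0 < π := Real.pi_pos
  have ha : 0 < a := hb.trans hba
  set G : ℝ → ℝ := fun θ => F₂ θ - F₁ θ with hGdef
  have hG : ∀ θ ∈ Ioo (0:ℝ) (π/2), HasDerivAt G (V₂ θ - V₁ θ) θ :=
    fun θ hθ => (hF₂ θ hθ).sub (hF₁ θ hθ)
  -- positivity of the derivative
  have hpos : ∀ θ ∈ Ioo (0:ℝ) (π/2), 0 < V₂ θ - V₁ θ := by
    intro θ hθ
    have hs : 0 < Real.sin θ := Real.sin_pos_of_pos_of_lt_pi hθ.1 (hθ.2.trans (by linarith))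
    have hc : 0 < Real.cos θ := Real.cos_pos_of_mem_Ioo ⟨by linarith [hθ.1], hθ.2⟩
    have hpy : Real.sin θ ^ 2 + Real.cos θ ^ 2 = 1 := Real.sin_sq_add_cos_sq θ
    have hD₁ : 0 < ξ * Real.cos θ ^ 2 + η * Real.sin θ ^ 2 := by nlinarith
    have hD₂ : 0 < m + ρ * π * b ^ 2 * Real.cos θ ^ 2 + ρ * π * a ^ 2 * Real.sin θ ^ 2 := by
      positivity
    rw [hV₁, hV₂, sub_pos, div_lt_div_iff₀ hD₁ hD₂]
    have key : a * (m + ρ * π * a ^ 2) * Real.sin θ * (ξ * Real.cos θ ^ 2 + η * Real.sin θ ^ 2)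
        - a * η * Real.sin θ * (m + ρ * π * b ^ 2 * Real.cos θ ^ 2 + ρ * π * a ^ 2 * Real.sin θ ^ 2)
        = a * Real.sin θ * Real.cos θ ^ 2 * (m * (ξ - η) + ρ * π * (ξ * a ^ 2 - η * b ^ 2)) := by
      linear_combination (a * Real.sin θ * m * η) * hpy
    have hposr : 0 < a * Real.sin θ * Real.cos θ ^ 2 * (m * (ξ - η) + ρ * π * (ξ * a ^ 2 - η * b ^ 2)) :=
      mul_pos (mul_pos (mul_pos ha hs) (pow_pos hc 2)) hkey
    linarith
  have hsub : Icc (π/6) (π/3) ⊆ Ioo (0:ℝ) (π/2) := by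
    intro x hx
    constructor <;> [linarith [hx.1]; linarith [hx.2]]
  have hcont : ContinuousOn G (Icc (π/6) (π/3)) := fun x hx =>
    (hG x (hsub hx)).continuousAt.continuousWithinAt
  have hmono : StrictMonoOn G (Icc (π/6) (π/3)) := by
    apply StrictMonoOn.mono (s := Icc (π/6) (π/3)) ?_ subset_rfl
    refine strictMonoOn_of_deriv_pos (convex_Icc _ _) hcont ?_
    intro x hx
    rw [interior_Icc] at hx
    have hx' : x ∈ Ioo (0:ℝ) (π/2) := hsub (Ioo_subset_Icc_self hx)
    rw [(hG x hx').deriv]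
    exact hpos x hx'
  have h63 : (π/6 : ℝ) < π/3 := by linarith
  have hmem6 : (π/6 : ℝ) ∈ Icc (π/6) (π/3) := ⟨le_refl _, h63.le⟩
  have hmem3 : (π/3 : ℝ) ∈ Icc (π/6) (π/3) := ⟨h63.le, le_refl _⟩
  have huv : G (π/6) < G (π/3) := hmono hmem6 hmem3 h63
  refine ⟨G (π/3) - G (π/6), by linarith, ?_⟩
  intro c hc
  have hIVT := intermediate_value_Icc h63.le hcont
  rcases le_or_gt 0 c with h0 | h0
  · have : G (π/6) + c ∈ Icc (G (π/6)) (G (π/3)) := by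
      constructor <;> [linarith; linarith [abs_lt.mp hc]]
    obtain ⟨θ₁, hθ₁, hGθ₁⟩ := hIVT this
    exact ⟨θ₁, hsub hθ₁, π/6, hsub hmem6, by
      show G θ₁ - G (π/6) = c
      rw [hGθ₁]; ring⟩
  · have : G (π/6) + (-c) ∈ Icc (G (π/6)) (G (π/3)) := by
      constructor <;> [linarith; linarith [abs_lt.mp hc]]
    obtain ⟨θ₂, hθ₂, hGθ₂⟩ := hIVT this
    exact ⟨π/6, hsub hmem6, θ₂, hsub hθ₂, by
      show G (π/6) - G θ₂ = c
      rw [hGθ₂]; ring⟩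
end
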